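/- For every j ∈ ℤ, the sum of N(π) over all colored partitions π of length 3 with shape {j−1, j, j} (one part of degree j−1 and two parts of degree j, with arbitrary colors) equals 162. -/

import Mathlib

/-- A colored partition: a finitely supported multiplicity function on parts `X_s(j)`,
where `s` is the color and `j ∈ ℤ` the degree.  (Genuine colored partitions have
colors in `{1,…,8}`, expressed by `cpValid`.) -/
abbrev CPart := (ℕ × ℤ) →₀ ℕ

/-- The colored partition consisting of the single part `X_s(j)`. -/
noncomputable def Xp (s : ℕ) (j : ℤ) : CPart := Finsupp.single (s, j) 1

/-- The colors of all parts lie in `{1,…,8}`. -/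
def cpValid (π : CPart) : Prop := ∀ p ∈ π.support, 1 ≤ p.1 ∧ p.1 ≤ 8

/-- The length `ℓ(π)`: the total number of parts. -/
def cpLength (π : CPart) : ℕ := π.sum fun _ m => m

/-- The degree `|π|`: the sum of the degrees of the parts. -/
def cpDeg (π : CPart) : ℤ := π.sum fun p m => (m : ℤ) * p.2

/-- The shape `sh(π)`: the multiset of the degrees of the parts. -/
def cpShape (π : CPart) : Multiset ℤ := π.sum fun p m => Multiset.replicate m p.2

/-- `ρ ⊂ π` : `ρ` is a subpartition of `π`. -/
def cpSub (ρ π : CPart) : Prop := ∀ p, ρ p ≤ π p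

/-- The color pairs `(i₁,i₂)` for elements `X_{i₁}(j)X_{i₂}(j)` of `lt(R̄)`. -/
def eqPairs : List (ℕ × ℕ) :=
  [(1,1),(2,1),(2,2),(3,1),(3,2),(3,3),(4,2),(4,3),(4,4),(5,1),(5,2),(5,3),(5,4),(5,5),
   (6,2),(6,4),(6,5),(6,6),(7,3),(7,4),(7,5),(7,6),(7,7),(8,5),(8,6),(8,7),(8,8)]

/-- The color pairs `(i₁,i₂)` for elements `X_{i₁}(j−1)X_{i₂}(j)` of `lt(R̄)`. -/
def adjPairs : List (ℕ × ℕ) :=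
  [(1,1),(1,2),(1,3),(1,4),(1,5),(1,6),(1,7),(1,8),(2,2),(2,4),(2,6),(2,7),(2,8),
   (3,3),(3,5),(3,6),(3,7),(3,8),(4,7),(4,8),(5,6),(5,8),(6,6),(6,8),(7,7),(7,8),(8,8)]

/-- The set `lt(R̄)` of leading terms of the quadratic relations. -/
def ltR : Set CPart :=
  {ρ | ∃ j : ℤ, ∃ p ∈ eqPairs, ρ = Xp p.1 j + Xp p.2 j} ∪
  {ρ | ∃ j : ℤ, ∃ p ∈ adjPairs, ρ = Xp p.1 (j-1) + Xp p.2 j}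

/-- `E(π) = {ρ ∈ lt(R̄) : ρ ⊂ π}`. -/
def Eset (π : CPart) : Set CPart := {ρ | ρ ∈ ltR ∧ cpSub ρ π}

/-- `N(π) = max(#E(π) − 1, 0)`. -/
noncomputable def Npi (π : CPart) : ℕ := (Eset π).ncard - 1

/-- The set `R`: `lt(R̄)` together with the two families of cubic leading terms. -/
def Rset : Set CPart :=
  ltR ∪ {ρ | ∃ j : ℤ, ρ = Xp 3 (j-1) + Xp 4 j + Xp 1 j ∨
    ρ = Xp 8 (j-1) + Xp 4 (j-1) + Xp 6 j}

/-- The `𝔥`-weight of the color `s`, written in the basis `(α₁, α₂)`. -/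
def wcol : ℕ → ℤ × ℤ
  | 1 => (1, 1)
  | 2 => (1, 0)
  | 3 => (0, 1)
  | 4 => (0, 0)
  | 5 => (0, 0)
  | 6 => (0, -1)
  | 7 => (-1, 0)
  | 8 => (-1, -1)
  | _ => (0, 0)

/-- The weight `wt(π) ∈ ℤ²`. -/
def cpWt (π : CPart) : ℤ × ℤ := π.sum fun p m => m • wcol p.1

/-! Such a `π` is `X_a(j−1) X_b(j) X_c(j)` with colours `a` and `b ≤ c` in `{1,…,8}`. A length-two
subpartition of a length-three partition omits exactly one part, so `E(π)` consists of those of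
`X_b(j)X_c(j)`, `X_a(j−1)X_c(j)`, `X_a(j−1)X_b(j)` whose colour pairs are listed in `lt(R̄)`, the
last two coinciding when `b = c`. Hence `N(π)` depends on the colours only, and summing it over the
288 colour triples gives 162. -/

open Finsupp Finset

lemma Finsupp.toMultiset_injective {α : Type*} :
    Function.Injective (toMultiset : (α →₀ ℕ) → Multiset α) := by
  classical exact (orderIsoMultiset (ι := α)).injective

noncomputable def triPart (j : ℤ) (a b c : ℕ) : CPart := Xp a (j - 1) + Xp b j + Xp c j

lemma triPart_comm (j : ℤ) (a b c : ℕ) : triPart j a b c = triPart j a c b :=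
  add_right_comm _ _ _

lemma toMultiset_triPart (j : ℤ) (a b c : ℕ) :
    toMultiset (triPart j a b c) = (a, j - 1) ::ₘ (b, j) ::ₘ {(c, j)} := by
  simp [triPart, Xp, Multiset.singleton_add]

lemma cpLength_eq_card_toMultiset (π : CPart) : cpLength π = Multiset.card (toMultiset π) :=
  (card_toMultiset π).symm

lemma cpShape_eq_map_toMultiset (π : CPart) : cpShape π = (toMultiset π).map Prod.snd := by
  rw [toMultiset_map, toMultiset_apply, sum_mapDomain_index (by simp) (by simp [add_nsmul])]
  simp [cpShape, Multiset.nsmul_singleton]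

lemma cpValid_iff_forall_mem_toMultiset (π : CPart) :
    cpValid π ↔ ∀ p ∈ toMultiset π, 1 ≤ p.1 ∧ p.1 ≤ 8 := by
  simp [cpValid, mem_toMultiset]

lemma exists_triPart_of_cpShape {π : CPart} {j : ℤ} (h : cpShape π = {j - 1, j, j}) :
    ∃ a b c, π = triPart j a b c := by
  classical
  rw [cpShape_eq_map_toMultiset] at h
  obtain ⟨⟨a, _⟩, ha, rfl, h⟩ := (Multiset.map_eq_cons _ _ _ _).mpr h
  obtain ⟨⟨b, _⟩, hb, rfl, h⟩ := (Multiset.map_eq_cons _ _ _ _).mpr h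
  obtain ⟨⟨c, _⟩, hc, rfl, h⟩ := (Multiset.map_eq_cons _ _ _ _).mpr h
  refine ⟨a, b, c, toMultiset_injective ?_⟩
  rw [toMultiset_triPart, ← Multiset.cons_erase ha, ← Multiset.cons_erase hb,
    ← Multiset.cons_erase hc, Multiset.map_eq_zero.mp h]
  rfl

lemma Xp_add_Xp_eq_Xp_add_Xp_iff {u v u' v' : ℕ} {x y x' y' : ℤ} :
    Xp u x + Xp v y = Xp u' x' + Xp v' y' ↔
      ((u, x) = (u', x') ∧ (v, y) = (v', y')) ∨ ((u, x) = (v', y') ∧ (v, y) = (u', x')) := by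
  simp [Xp, single_add_single_eq_single_add_single]

lemma triPart_injOn (j : ℤ) :
    Set.InjOn (fun t : ℕ × ℕ × ℕ => triPart j t.1 t.2.1 t.2.2) {t | t.2.1 ≤ t.2.2} := by
  rintro ⟨a, b, c⟩ (hbc : b ≤ c) ⟨a', b', c'⟩ (hbc' : b' ≤ c') h
  have ha : a' = a := by
    simpa [triPart, Xp, single_apply] using DFunLike.congr_fun h (a, j - 1)
  subst ha
  simp only [triPart, add_assoc, add_right_inj, Xp_add_Xp_eq_Xp_add_Xp_iff, Prod.mk.injEq] at h
  simp only [Prod.mk.injEq, and_true, true_and] at h ⊢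
  omega

def colorTriples : Finset (ℕ × ℕ × ℕ) :=
  {t ∈ Icc 1 8 ×ˢ Icc 1 8 ×ˢ Icc 1 8 | t.2.1 ≤ t.2.2}

lemma shapeSet_eq_image (j : ℤ) :
    {π : CPart | cpValid π ∧ cpLength π = 3 ∧ cpShape π = {j - 1, j, j}} =
      (fun t : ℕ × ℕ × ℕ => triPart j t.1 t.2.1 t.2.2) '' colorTriples := by
  ext π
  constructor
  · rintro ⟨hπ, -, hshape⟩
    obtain ⟨a, b, c, rfl⟩ := exists_triPart_of_cpShape hshape
    rw [cpValid_iff_forall_mem_toMultiset, toMultiset_triPart] at hπ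
    simp only [Multiset.mem_cons, Multiset.mem_singleton, forall_eq_or_imp, forall_eq] at hπ
    rcases le_total b c with hbc | hcb
    · exact ⟨(a, b, c), by simp [colorTriples, *], rfl⟩
    · exact ⟨(a, c, b), by simp [colorTriples, *], triPart_comm j a c b⟩
  · rintro ⟨⟨a, b, c⟩, ht, rfl⟩
    simp only [colorTriples, coe_filter, mem_product, mem_Icc, Set.mem_ofPred_eq] at ht
    refine ⟨?_, ?_, ?_⟩
    · simp [cpValid_iff_forall_mem_toMultiset, toMultiset_triPart, *]
    · simp [cpLength_eq_card_toMultiset, toMultiset_triPart]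
    · simp [cpShape_eq_map_toMultiset, toMultiset_triPart]

lemma cpLength_add (ρ σ : CPart) : cpLength (ρ + σ) = cpLength ρ + cpLength σ :=
  sum_add_index' (fun _ => rfl) fun _ _ _ => rfl

lemma cpLength_Xp (s : ℕ) (j : ℤ) : cpLength (Xp s j) = 1 :=
  sum_single_index rfl

lemma cpLength_of_mem_ltR {ρ : CPart} (hρ : ρ ∈ ltR) : cpLength ρ = 2 := by
  rcases hρ with ⟨_, _, _, rfl⟩ | ⟨_, _, _, rfl⟩ <;> simp [cpLength_add, cpLength_Xp]

lemma Xp_add_Xp_mem_ltR_iff (u v : ℕ) (i : ℤ) :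
    Xp u i + Xp v i ∈ ltR ↔ (u, v) ∈ eqPairs ∨ (v, u) ∈ eqPairs := by
  simp only [ltR, Set.mem_union, Set.mem_ofPred_eq, Xp_add_Xp_eq_Xp_add_Xp_iff, Prod.mk.injEq]
  constructor
  · rintro (⟨_, p, hp, ⟨⟨rfl, -⟩, rfl, -⟩ | ⟨⟨rfl, -⟩, rfl, -⟩⟩ |
      ⟨_, _, _, ⟨⟨-, h⟩, -, h'⟩ | ⟨⟨-, h⟩, -, h'⟩⟩) <;> first | omega | simp [hp]
  · rintro (h | h)
    · exact Or.inl ⟨i, _, h, Or.inl ⟨⟨rfl, rfl⟩, rfl, rfl⟩⟩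
    · exact Or.inl ⟨i, _, h, Or.inr ⟨⟨rfl, rfl⟩, rfl, rfl⟩⟩

lemma Xp_sub_one_add_Xp_mem_ltR_iff (u v : ℕ) (i : ℤ) :
    Xp u (i - 1) + Xp v i ∈ ltR ↔ (u, v) ∈ adjPairs := by
  simp only [ltR, Set.mem_union, Set.mem_ofPred_eq, Xp_add_Xp_eq_Xp_add_Xp_iff, Prod.mk.injEq]
  constructor
  · rintro (⟨_, _, _, ⟨⟨-, h⟩, -, h'⟩ | ⟨⟨-, h⟩, -, h'⟩⟩ |
      ⟨_, p, hp, ⟨⟨rfl, -⟩, rfl, -⟩ | ⟨⟨-, h⟩, -, h'⟩⟩)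
    · omega
    · omega
    · exact hp
    · omega
  · exact fun h => Or.inr ⟨i, _, h, Or.inl ⟨⟨rfl, rfl⟩, rfl, rfl⟩⟩

lemma exists_eq_tsub_single_of_cpSub {ρ π : CPart} (hsub : cpSub ρ π)
    (hlen : cpLength ρ + 1 = cpLength π) : ∃ p ∈ π.support, ρ = π - single p 1 := by
  obtain ⟨δ, rfl⟩ := le_iff_exists_add.mp (show ρ ≤ π from hsub)
  have hδ : cpLength δ = 1 := by simpa [cpLength_add] using hlen.symm
  obtain ⟨p, rfl⟩ := (sum_eq_one_iff δ).mp hδ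
  exact ⟨p, by simp, (add_tsub_cancel_right ρ _).symm⟩

open Classical in
lemma ncard_Eset_of_cpLength_eq_three {π : CPart} (hπ : cpLength π = 3) :
    (Eset π).ncard = #{p ∈ π.support | π - single p 1 ∈ ltR} := by
  have hE : Eset π = (fun p => π - single p 1) '' ↑{p ∈ π.support | π - single p 1 ∈ ltR} := by
    ext ρ
    constructor
    · rintro ⟨hρ, hsub⟩
      obtain ⟨p, hp, rfl⟩ :=
        exists_eq_tsub_single_of_cpSub hsub (by rw [cpLength_of_mem_ltR hρ, hπ])
      exact ⟨p, mem_filter.mpr ⟨hp, hρ⟩, rfl⟩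
    · rintro ⟨p, hp, rfl⟩
      exact ⟨(mem_filter.mp hp).2, fun q => tsub_le_self (a := π q)⟩
  rw [hE, Set.InjOn.ncard_image, Set.ncard_coe_finset]
  intro p hp q hq h
  have hle : ∀ r ∈ π.support, single r 1 ≤ π := fun r hr => by
    simpa [Nat.one_le_iff_ne_zero] using hr
  have := congrArg (π - ·) h
  simp only [tsub_tsub_cancel_of_le (hle p (mem_filter.mp hp).1),
    tsub_tsub_cancel_of_le (hle q (mem_filter.mp hq).1)] at this
  exact single_left_injective one_ne_zero this

lemma support_triPart (j : ℤ) (a b c : ℕ) :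
    (triPart j a b c).support = {(a, j - 1), (b, j), (c, j)} := by
  classical
  rw [← toFinset_toMultiset, toMultiset_triPart]
  simp

lemma triPart_tsub_single_left (j : ℤ) (a b c : ℕ) :
    triPart j a b c - single (a, j - 1) 1 = Xp b j + Xp c j := by
  rw [triPart, add_assoc, Xp, add_tsub_cancel_left]

lemma triPart_tsub_single_right (j : ℤ) (a b c : ℕ) :
    triPart j a b c - single (c, j) 1 = Xp a (j - 1) + Xp b j :=
  add_tsub_cancel_right _ _

lemma triPart_tsub_single_mid (j : ℤ) (a b c : ℕ) :
    triPart j a b c - single (b, j) 1 = Xp a (j - 1) + Xp c j := by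
  rw [triPart_comm, triPart_tsub_single_right]

def npiColors (a b c : ℕ) : ℕ :=
  (if (b, c) ∈ eqPairs ∨ (c, b) ∈ eqPairs then 1 else 0) +
    (if b = c then 0 else if (a, c) ∈ adjPairs then 1 else 0) +
    (if (a, b) ∈ adjPairs then 1 else 0) - 1

lemma Npi_triPart (j : ℤ) (a b c : ℕ) : Npi (triPart j a b c) = npiColors a b c := by
  have hlen : cpLength (triPart j a b c) = 3 := by
    simp [cpLength_eq_card_toMultiset, toMultiset_triPart]
  have hne : (a, j - 1) ∉ ({(b, j), (c, j)} : Finset (ℕ × ℤ)) := by simp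
  rw [Npi, ncard_Eset_of_cpLength_eq_three hlen, support_triPart, card_filter, sum_insert hne,
    triPart_tsub_single_left, Xp_add_Xp_mem_ltR_iff, npiColors]
  by_cases hbc : b = c
  · subst hbc
    rw [insert_eq_of_mem (mem_singleton_self _), sum_singleton, triPart_tsub_single_mid,
      Xp_sub_one_add_Xp_mem_ltR_iff, if_pos rfl, add_zero]
    congr
  · rw [sum_pair (by simpa using hbc), triPart_tsub_single_mid, triPart_tsub_single_right,
      Xp_sub_one_add_Xp_mem_ltR_iff, Xp_sub_one_add_Xp_mem_ltR_iff, if_neg hbc, add_assoc]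
    congr

/-- The sum of `N(π)` over all colored partitions of length 3 and shape `{j−1,j,j}` is 162. -/
theorem sum_N_shape_jm1_j_j (j : ℤ) :
    (∑ᶠ π ∈ {π : CPart | cpValid π ∧ cpLength π = 3 ∧ cpShape π = {j - 1, j, j}},
      Npi π) = 162 := by
  have hinj : Set.InjOn (fun t : ℕ × ℕ × ℕ => triPart j t.1 t.2.1 t.2.2) colorTriples :=
    (triPart_injOn j).mono fun t ht => (mem_filter.mp ht).2
  rw [shapeSet_eq_image, finsum_mem_image hinj, finsum_mem_coe_finset]
  simp only [Npi_triPart]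
  decide +kernel
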